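/- For integers n₁, n₂ ≥ 1, n = n₁ + n₂, 2 ≤ a ≤ n₁ and 0 ≤ b ≤ n₂ − 1, one has SS₂(a−1,b,n₁,n₂) − SS₂(a,b,n₁,n₂) = 0 if b = 0, and SS₂(a−1,b,n₁,n₂) − SS₂(a,b,n₁,n₂) = (a+b−2)!·(n−a−b)!·(n₂−1)·C(n₁, a−1)·C(n₂−2, b−1)/n! if b ≥ 1; in particular the index of a type-2 player is weakly decreasing in a. -/

import Mathlib

open Finset

/-- Winning predicate of the bipartite complete game with minimum `G(n₁,n₂,a,b)` on the player
set `Fin (n₁ + n₂)`, where the players `i < n₁` are of type 1 and the remaining ones of type 2: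
a coalition `S` is winning iff `|S ∩ T₁| ≥ a` and `|S| ≥ a + b`. -/
def BipWinning (n1 n2 a b : ℕ) (S : Finset (Fin (n1 + n2))) : Prop :=
  a ≤ (S.filter fun i : Fin (n1 + n2) => (i : ℕ) < n1).card ∧ a + b ≤ S.card

/-- The number of swings of player `i`: coalitions `S` with `i ∈ S`, `S` winning and
`S ∖ {i}` losing. -/
noncomputable def swingCount {n : ℕ} (Win : Finset (Fin n) → Prop) (i : Fin n) : ℕ :=
  Set.ncard {S : Finset (Fin n) | i ∈ S ∧ Win S ∧ ¬ Win (S.erase i)}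

/-- The number of swings of player `i` of cardinality `s`. -/
noncomputable def swingCountCard {n : ℕ} (Win : Finset (Fin n) → Prop) (i : Fin n) (s : ℕ) : ℕ :=
  Set.ncard {S : Finset (Fin n) | S.card = s ∧ i ∈ S ∧ Win S ∧ ¬ Win (S.erase i)}

/-- The Shapley–Shubik power index of player `i`:
`SS_i = Σ_{s=1}^{n} ((s-1)!(n-s)!/n!) · c_i^s`. -/
noncomputable def SSindex {n : ℕ} (Win : Finset (Fin n) → Prop) (i : Fin n) : ℚ :=
  ∑ s ∈ Finset.Icc 1 n,
    ((Nat.factorial (s - 1) : ℚ) * (Nat.factorial (n - s) : ℚ) / (Nat.factorial n : ℚ)) *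
      (swingCountCard Win i s : ℚ)

lemma card_T1 (n1 n2 : ℕ) :
    ((univ : Finset (Fin (n1 + n2))).filter fun j : Fin (n1 + n2) => (j : ℕ) < n1).card = n1 := by
  have h : ((univ : Finset (Fin (n1 + n2))).filter fun j : Fin (n1 + n2) => (j : ℕ) < n1).card
      = (Finset.range n1).card := by
    refine Finset.card_bij (fun j _ => (j : ℕ)) ?_ ?_ ?_
    · intro j hj
      simp only [mem_filter] at hj
      simpa using hj.2
    · intro j hj j' hj' h
      exact Fin.val_injective h
    · intro m hm
      rw [Finset.mem_range] at hm
      exact ⟨⟨m, by omega⟩, by simp [hm], rfl⟩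
  rw [h, Finset.card_range]
lemma card_T2 (n1 n2 : ℕ) :
    ((univ : Finset (Fin (n1 + n2))).filter fun j : Fin (n1 + n2) => ¬ (j : ℕ) < n1).card = n2 := by
  have := Finset.card_filter_add_card_filter_not
    (s := (univ : Finset (Fin (n1 + n2)))) (p := fun j => (j : ℕ) < n1)
  rw [card_T1] at this
  simp only [Finset.card_univ, Fintype.card_fin] at this
  omega
def goodFinset (n1 n2 a b : ℕ) (i : Fin (n1 + n2)) :
    Finset (Finset (Fin (n1 + n2))) :=
  univ.filter fun S => S.card = a + b ∧ i ∈ S ∧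
    a ≤ (S.filter fun j : Fin (n1 + n2) => (j : ℕ) < n1).card
lemma filter_erase_eq (n1 n2 : ℕ) (i : Fin (n1 + n2)) (hi : n1 ≤ (i : ℕ))
    (S : Finset (Fin (n1 + n2))) :
    ((S.erase i).filter fun j : Fin (n1 + n2) => (j : ℕ) < n1)
      = S.filter fun j : Fin (n1 + n2) => (j : ℕ) < n1 := by
  rw [Finset.filter_erase]
  apply Finset.erase_eq_of_notMem
  simp only [mem_filter]
  omega
lemma goodFinset_card (n1 n2 a b : ℕ) (ha : 1 ≤ a) (i : Fin (n1 + n2)) (hi : n1 ≤ (i : ℕ)) :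
    (goodFinset n1 n2 a b i).card
      = ∑ k ∈ Ico a (a + b), n1.choose k * (n2 - 1).choose (a + b - 1 - k) := by
  classical
  have hinotp : ¬ ((i : ℕ) < n1) := by omega
  have hmaps : ∀ S ∈ goodFinset n1 n2 a b i,
      (S.filter fun j : Fin (n1 + n2) => (j : ℕ) < n1).card ∈ Ico a (a + b) := by
    intro S hS
    simp only [goodFinset, mem_filter, mem_univ, true_and] at hS
    obtain ⟨hcard, hiS, hfilt⟩ := hS
    rw [mem_Ico]
    refine ⟨hfilt, ?_⟩
    have hsub : (S.filter fun j : Fin (n1 + n2) => (j : ℕ) < n1) ⊆ S.erase i := by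
      intro x hx
      simp only [mem_filter] at hx
      rw [Finset.mem_erase]
      exact ⟨fun h => hinotp (h ▸ hx.2), hx.1⟩
    have := Finset.card_le_card hsub
    rw [Finset.card_erase_of_mem hiS, hcard] at this
    omega
  rw [Finset.card_eq_sum_card_fiberwise hmaps]
  apply Finset.sum_congr rfl
  intro k hk
  rw [mem_Ico] at hk
  -- fiber count = C(n1,k) * C(n2-1, a+b-1-k)
  have hT2i : i ∈ (univ : Finset (Fin (n1 + n2))).filter fun j : Fin (n1 + n2) => ¬ (j : ℕ) < n1 := by
    simp only [mem_filter, mem_univ, true_and]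
    exact hinotp
  rw [show n1.choose k * (n2 - 1).choose (a + b - 1 - k)
      = ((Finset.powersetCard k ((univ : Finset (Fin (n1 + n2))).filter fun j : Fin (n1 + n2) => (j : ℕ) < n1)) ×ˢ
         (Finset.powersetCard (a + b - 1 - k)
           (((univ : Finset (Fin (n1 + n2))).filter fun j : Fin (n1 + n2) => ¬ (j : ℕ) < n1).erase i))).card from by
    rw [Finset.card_product, Finset.card_powersetCard, Finset.card_powersetCard, card_T1,
      Finset.card_erase_of_mem hT2i, card_T2]]
  refine Finset.card_bij'
    (i := fun S _ => (S.filter fun j : Fin (n1+n2) => (j : ℕ) < n1,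
                      (S.erase i).filter fun j : Fin (n1+n2) => ¬ (j : ℕ) < n1))
    (j := fun P _ => insert i (P.1 ∪ P.2)) (hi := ?_) (hj := ?_) ?_ ?_
  · -- maps forward
    intro S hS
    simp only [mem_filter, goodFinset, mem_univ, true_and] at hS
    obtain ⟨⟨hcard, hiS, _⟩, hfk⟩ := hS
    rw [Finset.mem_product, Finset.mem_powersetCard, Finset.mem_powersetCard]
    refine ⟨⟨Finset.filter_subset_filter _ (Finset.subset_univ S), hfk⟩, ?_, ?_⟩
    · intro x hx
      simp only [mem_filter, Finset.mem_erase, mem_univ, true_and] at hx ⊢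
      exact ⟨hx.1.1, hx.2⟩
    · show ((S.erase i).filter fun j : Fin (n1+n2) => ¬ (j : ℕ) < n1).card = a + b - 1 - k
      have hsplit := Finset.card_filter_add_card_filter_not
        (s := S.erase i) (p := fun j : Fin (n1+n2) => (j : ℕ) < n1)
      rw [filter_erase_eq n1 n2 i hi S, hfk, Finset.card_erase_of_mem hiS, hcard] at hsplit
      omega
  · -- maps backward
    intro P hP
    rw [Finset.mem_product, Finset.mem_powersetCard, Finset.mem_powersetCard] at hP
    obtain ⟨⟨hA, hAk⟩, hB, hBk⟩ := hP
    have hiA : i ∉ P.1 := fun h => hinotp (by simpa using hA h)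
    have hiB : i ∉ P.2 := fun h => (Finset.mem_erase.mp (hB h)).1 rfl
    have hdisj : Disjoint P.1 P.2 := by
      rw [Finset.disjoint_left]
      intro x hx1 hx2
      have h1 := hA hx1
      have h2 := hB hx2
      simp only [mem_filter, Finset.mem_erase] at h1 h2
      exact h2.2.2 h1.2
    have hfiltA : (P.1 ∪ P.2).filter (fun j : Fin (n1+n2) => (j : ℕ) < n1) = P.1 := by
      rw [Finset.filter_union]
      have e1 : P.1.filter (fun j : Fin (n1+n2) => (j : ℕ) < n1) = P.1 :=
        Finset.filter_eq_self.mpr (fun x hx => by simpa using hA hx)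
      have e2 : P.2.filter (fun j : Fin (n1+n2) => (j : ℕ) < n1) = ∅ :=
        Finset.filter_eq_empty_iff.mpr (fun x hx => by
          have := hB hx
          simp only [mem_filter, Finset.mem_erase] at this
          exact this.2.2)
      rw [e1, e2, Finset.union_empty]
    simp only [mem_filter, goodFinset, mem_univ, true_and]
    have hiAB : i ∉ P.1 ∪ P.2 := by simp [hiA, hiB]
    have hcardins : (insert i (P.1 ∪ P.2)).card = a + b := by
      rw [Finset.card_insert_of_notMem hiAB, Finset.card_union_of_disjoint hdisj, hAk, hBk]
      omega
    have hfins : (insert i (P.1 ∪ P.2)).filter (fun j : Fin (n1+n2) => (j : ℕ) < n1) = P.1 := by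
      rw [Finset.filter_insert, if_neg hinotp, hfiltA]
    exact ⟨⟨hcardins, Finset.mem_insert_self i _, by rw [hfins]; omega⟩, by rw [hfins, hAk]⟩
  · -- left inverse
    intro S hS
    simp only [mem_filter, goodFinset, mem_univ, true_and] at hS
    obtain ⟨⟨hcard, hiS, _⟩, _⟩ := hS
    dsimp only
    rw [← filter_erase_eq n1 n2 i hi S, Finset.filter_union_filter_not_eq,
      Finset.insert_erase hiS]
  · -- right inverse
    intro P hP
    rw [Finset.mem_product, Finset.mem_powersetCard, Finset.mem_powersetCard] at hP
    obtain ⟨⟨hA, hAk⟩, hB, hBk⟩ := hP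
    have hiA : i ∉ P.1 := fun h => hinotp (by simpa using hA h)
    have hiB : i ∉ P.2 := fun h => (Finset.mem_erase.mp (hB h)).1 rfl
    have hiAB : i ∉ P.1 ∪ P.2 := by simp [hiA, hiB]
    have hfiltA : (P.1 ∪ P.2).filter (fun j : Fin (n1+n2) => (j : ℕ) < n1) = P.1 := by
      rw [Finset.filter_union]
      have e1 : P.1.filter (fun j : Fin (n1+n2) => (j : ℕ) < n1) = P.1 :=
        Finset.filter_eq_self.mpr (fun x hx => by simpa using hA hx)
      have e2 : P.2.filter (fun j : Fin (n1+n2) => (j : ℕ) < n1) = ∅ :=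
        Finset.filter_eq_empty_iff.mpr (fun x hx => by
          have := hB hx
          simp only [mem_filter, Finset.mem_erase] at this
          exact this.2.2)
      rw [e1, e2, Finset.union_empty]
    have hfiltB : (P.1 ∪ P.2).filter (fun j : Fin (n1+n2) => ¬ (j : ℕ) < n1) = P.2 := by
      rw [Finset.filter_union]
      have e1 : P.1.filter (fun j : Fin (n1+n2) => ¬ (j : ℕ) < n1) = ∅ :=
        Finset.filter_eq_empty_iff.mpr (fun x hx => by
          have := hA hx
          simp only [mem_filter] at this
          simpa using this.2)
      have e2 : P.2.filter (fun j : Fin (n1+n2) => ¬ (j : ℕ) < n1) = P.2 :=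
        Finset.filter_eq_self.mpr (fun x hx => by
          have := hB hx
          simp only [mem_filter, Finset.mem_erase] at this
          exact this.2.2)
      rw [e1, e2, Finset.empty_union]
    rw [Prod.ext_iff]
    constructor
    · simp only
      rw [Finset.filter_insert, if_neg hinotp, hfiltA]
    · simp only
      rw [Finset.erase_insert hiAB, hfiltB]
lemma ptwise (N M j m : ℕ) :
    (N + M - (j + m)) * (N.choose j * M.choose m)
      = (j+1) * (N.choose (j+1) * M.choose m) + (m+1) * (N.choose j * M.choose (m+1)) := by
  rcases le_or_gt j N with hj | hj
  · rcases le_or_gt m M with hm | hm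
    · have h1 : N.choose (j+1) * (j+1) = N.choose j * (N - j) := Nat.choose_succ_right_eq N j
      have h2 : M.choose (m+1) * (m+1) = M.choose m * (M - m) := Nat.choose_succ_right_eq M m
      have h3 : N + M - (j + m) = (N - j) + (M - m) := by omega
      rw [h3]
      nlinarith [h1, h2]
    · have h2 : M.choose m = 0 := Nat.choose_eq_zero_of_lt hm
      have h3 : M.choose (m+1) = 0 := Nat.choose_eq_zero_of_lt (by omega)
      simp [h2, h3]
  · have h1 : N.choose j = 0 := Nat.choose_eq_zero_of_lt hj
    have h2 : N.choose (j+1) = 0 := Nat.choose_eq_zero_of_lt (by omega)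
    simp [h1, h2]
lemma key_identity (n1 m c e : ℕ) (hn : c + 1 ≤ n1) (he : e ≤ m) :
    (n1 + (m+1) - (c+e)) * ∑ j ∈ Ico c (c + e + 1), n1.choose j * (m+1).choose (c + e - j)
      = (c + e + 1) * ∑ k ∈ Ico (c+1) (c + e + 2), n1.choose k * (m+1).choose (c + e + 1 - k)
        + (m+1) * (n1.choose c * m.choose e) := by
  have expand : ∀ j ∈ Ico c (c + e + 1),
      (n1 + (m+1) - (c+e)) * (n1.choose j * (m+1).choose (c + e - j))
        = (j+1) * (n1.choose (j+1) * (m+1).choose (c + e - j))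
          + (c + e + 1 - j) * (n1.choose j * (m+1).choose (c + e + 1 - j)) := by
    intro j hj
    rw [mem_Ico] at hj
    have hje : j ≤ c + e := by omega
    have h1 : n1 + (m+1) - (c+e) = n1 + (m+1) - (j + (c + e - j)) := by omega
    have h2 : c + e + 1 - j = (c + e - j) + 1 := by omega
    rw [h1, h2]
    exact ptwise n1 (m+1) j (c + e - j)
  rw [Finset.mul_sum, Finset.sum_congr rfl expand, Finset.sum_add_distrib]
  -- Sum A: reindex
  have hA : ∑ j ∈ Ico c (c + e + 1), (j+1) * (n1.choose (j+1) * (m+1).choose (c + e - j))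
      = ∑ k ∈ Ico (c+1) (c + e + 2), k * (n1.choose k * (m+1).choose (c + e + 1 - k)) := by
    rw [Finset.sum_Ico_eq_sum_range, Finset.sum_Ico_eq_sum_range]
    have hlen : c + e + 1 - c = c + e + 2 - (c + 1) := by omega
    rw [hlen]
    apply Finset.sum_congr rfl
    intro t ht
    rw [Finset.mem_range] at ht
    have h1 : c + t + 1 = c + 1 + t := by omega
    have h2 : c + e - (c + t) = e - t := by omega
    have h3 : c + e + 1 - (c + 1 + t) = e - t := by omega
    rw [h1, h2, h3]
  -- Sum B: split off bottom, extend top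
  have hB : ∑ j ∈ Ico c (c + e + 1), (c + e + 1 - j) * (n1.choose j * (m+1).choose (c + e + 1 - j))
      = (e+1) * (n1.choose c * (m+1).choose (e+1))
        + ∑ k ∈ Ico (c+1) (c + e + 2), (c + e + 1 - k) * (n1.choose k * (m+1).choose (c + e + 1 - k)) := by
    rw [Finset.sum_eq_sum_Ico_succ_bot (by omega : c < c + e + 1)]
    have h1 : c + e + 1 - c = e + 1 := by omega
    rw [h1]
    congr 1
    have h2 : c + e + 2 = (c + e + 1) + 1 := by omega
    rw [h2, Finset.sum_Ico_succ_top (by omega : c + 1 ≤ c + e + 1)]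
    simp
  rw [hA, hB]
  -- RHS: split coefficient
  have hR : (c + e + 1) * ∑ k ∈ Ico (c+1) (c + e + 2), n1.choose k * (m+1).choose (c + e + 1 - k)
      = ∑ k ∈ Ico (c+1) (c + e + 2), k * (n1.choose k * (m+1).choose (c + e + 1 - k))
        + ∑ k ∈ Ico (c+1) (c + e + 2), (c + e + 1 - k) * (n1.choose k * (m+1).choose (c + e + 1 - k)) := by
    rw [Finset.mul_sum, ← Finset.sum_add_distrib]
    apply Finset.sum_congr rfl
    intro k hk
    rw [mem_Ico] at hk
    generalize n1.choose k * (m+1).choose (c + e + 1 - k) = X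
    rw [← add_mul]
    congr 1
    omega
  rw [hR]
  -- final: (e+1) * C(m+1,e+1) = (m+1) * C(m,e)
  have hS : (e+1) * (n1.choose c * (m+1).choose (e+1)) = (m+1) * (n1.choose c * m.choose e) := by
    have := Nat.add_one_mul_choose_eq m e
    nlinarith [this]
  rw [hS]
  ring
lemma swingCountCard_eq (n1 n2 a b s : ℕ) (ha : 1 ≤ a) (i : Fin (n1 + n2)) (hi : n1 ≤ (i : ℕ)) :
    swingCountCard (BipWinning n1 n2 a b) i s
      = if s = a + b then (goodFinset n1 n2 a b i).card else 0 := by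
  unfold swingCountCard
  by_cases hs : s = a + b
  · rw [if_pos hs, ← Set.ncard_coe_finset]
    congr 1
    ext S
    simp only [Set.mem_setOf_eq, goodFinset, Finset.coe_filter, mem_univ, true_and]
    constructor
    · rintro ⟨hcard, hiS, ⟨hf, _⟩, _⟩
      exact ⟨by omega, hiS, hf⟩
    · rintro ⟨hcard, hiS, hf⟩
      refine ⟨by omega, hiS, ⟨hf, by omega⟩, ?_⟩
      rintro ⟨-, hw2⟩
      rw [Finset.card_erase_of_mem hiS] at hw2
      omega
  · rw [if_neg hs]
    convert Set.ncard_empty (Finset (Fin (n1 + n2)))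
    rw [Set.eq_empty_iff_forall_notMem]
    rintro S ⟨hcard, hiS, ⟨hf, hc⟩, hnw⟩
    apply hnw
    rw [BipWinning, filter_erase_eq n1 n2 i hi S, Finset.card_erase_of_mem hiS]
    constructor
    · exact hf
    · by_contra hlt
      exact hs (by omega)
lemma SSindex_eq (n1 n2 a b : ℕ) (ha : 1 ≤ a) (han : a ≤ n1) (hb : b ≤ n2 - 1)
    (hn2 : 1 ≤ n2) (i : Fin (n1 + n2)) (hi : n1 ≤ (i : ℕ)) :
    SSindex (BipWinning n1 n2 a b) i
      = ((a + b - 1).factorial : ℚ) * ((n1 + n2 - (a + b)).factorial : ℚ)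
          / ((n1 + n2).factorial : ℚ)
        * ((∑ k ∈ Ico a (a + b), n1.choose k * (n2 - 1).choose (a + b - 1 - k) : ℕ) : ℚ) := by
  unfold SSindex
  rw [Finset.sum_eq_single_of_mem (a + b) (by rw [mem_Icc]; omega)]
  · rw [swingCountCard_eq n1 n2 a b (a + b) ha i hi, if_pos rfl,
      goodFinset_card n1 n2 a b ha i hi]
  · intro s hsm hne
    rw [swingCountCard_eq n1 n2 a b s ha i hi, if_neg hne]
    simp

theorem SS_index_type_two_decreasing_in_a (n1 n2 a b : ℕ) (hn1 : 1 ≤ n1) (hn2 : 1 ≤ n2)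
    (ha : 2 ≤ a) (ha' : a ≤ n1) (hb : b ≤ n2 - 1)
    (i : Fin (n1 + n2)) (hi : n1 ≤ (i : ℕ)) :
    (b = 0 →
      SSindex (BipWinning n1 n2 (a - 1) b) i - SSindex (BipWinning n1 n2 a b) i = 0) ∧
    (1 ≤ b →
      SSindex (BipWinning n1 n2 (a - 1) b) i - SSindex (BipWinning n1 n2 a b) i =
        ((Nat.factorial (a + b - 2) * Nat.factorial (n1 + n2 - a - b) * (n2 - 1) *
          Nat.choose n1 (a - 1) * Nat.choose (n2 - 2) (b - 1) : ℕ) : ℚ) /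
          (Nat.factorial (n1 + n2) : ℚ)) ∧
    SSindex (BipWinning n1 n2 a b) i ≤ SSindex (BipWinning n1 n2 (a - 1) b) i := by
  rcases Nat.eq_zero_or_pos b with hb0 | hb1
  · subst hb0
    have h1 := SSindex_eq n1 n2 a 0 (by omega) ha' (by omega) hn2 i hi
    have h2 := SSindex_eq n1 n2 (a - 1) 0 (by omega) (by omega) (by omega) hn2 i hi
    rw [Nat.add_zero, Ico_self, Finset.sum_empty] at h1 h2
    rw [Nat.cast_zero, mul_zero] at h1 h2
    exact ⟨fun _ => by rw [h1, h2]; ring, fun h => absurd h (by omega), by rw [h1, h2]⟩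
  · obtain ⟨c, rfl⟩ : ∃ c, a = c + 1 := ⟨a - 1, by omega⟩
    obtain ⟨e, rfl⟩ : ∃ e, b = e + 1 := ⟨b - 1, by omega⟩
    obtain ⟨m, rfl⟩ : ∃ m, n2 = m + 2 := ⟨n2 - 2, by omega⟩
    have hc1 : 1 ≤ c := by omega
    have hcn : c + 1 ≤ n1 := by omega
    have hem : e ≤ m := by omega
    have h2 := SSindex_eq n1 (m + 2) c (e + 1) hc1 (by omega) (by omega) (by omega) i hi
    have h1 := SSindex_eq n1 (m + 2) (c + 1) (e + 1) (by omega) ha' (by omega) (by omega) i hi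
    -- normalize the sums
    have hsum2 : ∑ k ∈ Ico c (c + (e + 1)), n1.choose k * (m + 2 - 1).choose (c + (e + 1) - 1 - k)
        = ∑ j ∈ Ico c (c + e + 1), n1.choose j * (m + 1).choose (c + e - j) := by
      rw [show c + (e + 1) = c + e + 1 by omega]
      refine Finset.sum_congr rfl fun k hk => ?_
      rw [mem_Ico] at hk
      rw [show m + 2 - 1 = m + 1 by omega, show c + e + 1 - 1 - k = c + e - k by omega]
    have hsum1 : ∑ k ∈ Ico (c + 1) (c + 1 + (e + 1)),
          n1.choose k * (m + 2 - 1).choose (c + 1 + (e + 1) - 1 - k)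
        = ∑ k ∈ Ico (c + 1) (c + e + 2), n1.choose k * (m + 1).choose (c + e + 1 - k) := by
      rw [show c + 1 + (e + 1) = c + e + 2 by omega]
      refine Finset.sum_congr rfl fun k hk => ?_
      rw [mem_Ico] at hk
      rw [show m + 2 - 1 = m + 1 by omega, show c + e + 2 - 1 - k = c + e + 1 - k by omega]
    rw [hsum2] at h2
    rw [hsum1] at h1
    rw [show c + (e + 1) - 1 = c + e by omega] at h2
    rw [show c + 1 + (e + 1) - 1 = c + e + 1 by omega] at h1
    rw [show c + 1 - 1 = c by omega] at *
    -- factorial manipulations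
    have hF2 : ((n1 + (m + 2) - (c + (e + 1))).factorial : ℚ)
        = ((n1 + (m + 1) - (c + e) : ℕ) : ℚ)
          * ((n1 + (m + 2) - (c + 1 + (e + 1))).factorial : ℚ) := by
      rw [show n1 + (m + 2) - (c + (e + 1)) = (n1 + (m + 2) - (c + 1 + (e + 1))) + 1 by omega,
        Nat.factorial_succ,
        show n1 + (m + 2) - (c + 1 + (e + 1)) + 1 = n1 + (m + 1) - (c + e) by omega]
      push_cast
      ring
    have hfact1 : ((c + e + 1).factorial : ℚ) = ((c + e + 1 : ℕ) : ℚ) * ((c + e).factorial : ℚ) := by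
      rw [Nat.factorial_succ]
      push_cast
      ring
    have key := key_identity n1 m c e hcn hem
    have keyq : ((n1 + (m + 1) - (c + e) : ℕ) : ℚ)
          * ((∑ j ∈ Ico c (c + e + 1), n1.choose j * (m + 1).choose (c + e - j) : ℕ) : ℚ)
        = ((c + e + 1 : ℕ) : ℚ)
            * ((∑ k ∈ Ico (c + 1) (c + e + 2), n1.choose k * (m + 1).choose (c + e + 1 - k) : ℕ) : ℚ)
          + ((m + 1 : ℕ) : ℚ) * ((n1.choose c * m.choose e : ℕ) : ℚ) := by
      exact_mod_cast congrArg (fun x : ℕ => (x : ℚ)) key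
    have hdiff : SSindex (BipWinning n1 (m + 2) c (e + 1)) i
          - SSindex (BipWinning n1 (m + 2) (c + 1) (e + 1)) i =
        ((Nat.factorial (c + 1 + (e + 1) - 2) * Nat.factorial (n1 + (m + 2) - (c + 1) - (e + 1)) *
            (m + 2 - 1) * Nat.choose n1 c * Nat.choose (m + 2 - 2) (e + 1 - 1) : ℕ) : ℚ) /
          (Nat.factorial (n1 + (m + 2)) : ℚ) := by
      rw [h1, h2, hF2, hfact1,
        show c + 1 + (e + 1) - 2 = c + e by omega,
        show n1 + (m + 2) - (c + 1) - (e + 1) = n1 + (m + 2) - (c + 1 + (e + 1)) by omega,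
        show m + 2 - 1 = m + 1 by omega, show m + 2 - 2 = m by omega,
        show e + 1 - 1 = e by omega]
      push_cast
      push_cast at keyq
      linear_combination (((c + e).factorial : ℚ) *
        ((n1 + (m + 2) - (c + 1 + (e + 1))).factorial : ℚ) /
        ((n1 + (m + 2)).factorial : ℚ)) * keyq
    refine ⟨fun h => absurd h (by omega), fun _ => hdiff, ?_⟩
    have hpos : 0 ≤ ((Nat.factorial (c + 1 + (e + 1) - 2) *
        Nat.factorial (n1 + (m + 2) - (c + 1) - (e + 1)) *
        (m + 2 - 1) * Nat.choose n1 c * Nat.choose (m + 2 - 2) (e + 1 - 1) : ℕ) : ℚ) /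
        (Nat.factorial (n1 + (m + 2)) : ℚ) :=
      div_nonneg (Nat.cast_nonneg _) (Nat.cast_nonneg _)
    linarith [hdiff, hpos]
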